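/- arXiv:2504.19823 — 4 statements merged into one kernel-verified Lean document; each statement's English description precedes it below -/
import Mathlib

section
/- Let α > 1 and γ > 0, and let μ₁, μ₂ : ℝ → ℝ be continuous functions that are positive on [0,∞) and satisfy μ₁(t) ≤ μ₂(t) for all t ≥ 0. Then S_{γ,μ₁,α}(t) ≤ S_{γ,μ₂,α}(t) for every t ≥ 0; that is, the Bernoulli factor is monotone nondecreasing in the growth rate μ. -/
open Real Set

/-- The Bernoulli factor `S_{γ,μ,α}` from the localization principle, with real (rpow) powers. -/
noncomputable def bernoulliFactor (α γ : ℝ) (μ : ℝ → ℝ) (t : ℝ) : ℝ :=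
  (Real.exp ((1 - α) * ∫ s in (0:ℝ)..t, μ s) *
    (γ ^ (1 - α) +
      (α - 1) * ∫ τ in (0:ℝ)..t, Real.exp (-(1 - α) * ∫ s in (0:ℝ)..τ, μ s))) ^ (1 / (1 - α))

theorem bernoulliFactor_mono_in_mu (α γ : ℝ) (hα : 1 < α) (hγ : 0 < γ)
    (μ₁ μ₂ : ℝ → ℝ) (hμ₁c : Continuous μ₁) (hμ₂c : Continuous μ₂)
    (hμ₁pos : ∀ t, 0 ≤ t → 0 < μ₁ t) (hμ₂pos : ∀ t, 0 ≤ t → 0 < μ₂ t)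
    (hle : ∀ t, 0 ≤ t → μ₁ t ≤ μ₂ t) :
    ∀ t, 0 ≤ t → bernoulliFactor α γ μ₁ t ≤ bernoulliFactor α γ μ₂ t := by
  intro t ht
  have hc : (1 : ℝ) - α < 0 := by linarith
  set M₁ : ℝ → ℝ := fun τ => ∫ s in (0:ℝ)..τ, μ₁ s with hM₁def
  set M₂ : ℝ → ℝ := fun τ => ∫ s in (0:ℝ)..τ, μ₂ s with hM₂def
  have hM₁c : Continuous M₁ :=
    intervalIntegral.continuous_primitive (fun a b => hμ₁c.intervalIntegrable a b) 0
  have hM₂c : Continuous M₂ :=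
    intervalIntegral.continuous_primitive (fun a b => hμ₂c.intervalIntegrable a b) 0
  -- key: for 0 ≤ τ ≤ t, M₁ t - M₁ τ ≤ M₂ t - M₂ τ
  have key : ∀ τ, 0 ≤ τ → τ ≤ t → M₁ t - M₁ τ ≤ M₂ t - M₂ τ := by
    intro τ hτ hτt
    have h1 : M₁ τ + ∫ s in τ..t, μ₁ s = M₁ t :=
      intervalIntegral.integral_add_adjacent_intervals
        (hμ₁c.intervalIntegrable 0 τ) (hμ₁c.intervalIntegrable τ t)
    have h2 : M₂ τ + ∫ s in τ..t, μ₂ s = M₂ t :=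
      intervalIntegral.integral_add_adjacent_intervals
        (hμ₂c.intervalIntegrable 0 τ) (hμ₂c.intervalIntegrable τ t)
    have h3 : (∫ s in τ..t, μ₁ s) ≤ ∫ s in τ..t, μ₂ s :=
      intervalIntegral.integral_mono_on hτt (hμ₁c.intervalIntegrable τ t)
        (hμ₂c.intervalIntegrable τ t)
        (fun x hx => hle x (le_trans hτ hx.1))
    linarith
  have hMt : M₁ t ≤ M₂ t := by
    have := key 0 le_rfl ht
    simp only [hM₁def, hM₂def, intervalIntegral.integral_same] at this ⊢
    linarith
  -- rewrite both sides pushing the exp inside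
  have rw_eq : ∀ (μ : ℝ → ℝ), Continuous μ →
      Real.exp ((1 - α) * ∫ s in (0:ℝ)..t, μ s) *
        (γ ^ (1 - α) +
          (α - 1) * ∫ τ in (0:ℝ)..t, Real.exp (-(1 - α) * ∫ s in (0:ℝ)..τ, μ s)) =
      γ ^ (1 - α) * Real.exp ((1 - α) * ∫ s in (0:ℝ)..t, μ s) +
        (α - 1) * ∫ τ in (0:ℝ)..t,
          Real.exp ((1 - α) * ((∫ s in (0:ℝ)..t, μ s) - ∫ s in (0:ℝ)..τ, μ s)) := by
    intro μ hμ
    have h1 : (∫ τ in (0:ℝ)..t, Real.exp ((1 - α) *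
          ((∫ s in (0:ℝ)..t, μ s) - ∫ s in (0:ℝ)..τ, μ s)))
        = ∫ τ in (0:ℝ)..t, Real.exp ((1 - α) * ∫ s in (0:ℝ)..t, μ s) *
            Real.exp (-(1 - α) * ∫ s in (0:ℝ)..τ, μ s) := by
      apply intervalIntegral.integral_congr
      intro x _
      simp only [← Real.exp_add]
      ring_nf
    rw [h1, intervalIntegral.integral_const_mul]
    ring
  -- integrability of the new integrands
  have hint : ∀ (M : ℝ → ℝ), Continuous M → IntervalIntegrable
      (fun τ => Real.exp ((1 - α) * (M t - M τ))) MeasureTheory.volume 0 t := by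
    intro M hM
    exact (Real.continuous_exp.comp (continuous_const.mul
      (continuous_const.sub hM))).intervalIntegrable 0 t
  -- inner expression for μ₂ ≤ inner for μ₁
  have hinner :
      Real.exp ((1 - α) * M₂ t) *
        (γ ^ (1 - α) + (α - 1) * ∫ τ in (0:ℝ)..t, Real.exp (-(1 - α) * M₂ τ)) ≤
      Real.exp ((1 - α) * M₁ t) *
        (γ ^ (1 - α) + (α - 1) * ∫ τ in (0:ℝ)..t, Real.exp (-(1 - α) * M₁ τ)) := by
    rw [rw_eq μ₁ hμ₁c, rw_eq μ₂ hμ₂c]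
    have hterm1 : γ ^ (1 - α) * Real.exp ((1 - α) * M₂ t) ≤
        γ ^ (1 - α) * Real.exp ((1 - α) * M₁ t) := by
      apply mul_le_mul_of_nonneg_left _ (Real.rpow_nonneg hγ.le _)
      exact Real.exp_le_exp.mpr (by nlinarith)
    have hterm2 : (∫ τ in (0:ℝ)..t, Real.exp ((1 - α) * (M₂ t - M₂ τ))) ≤
        ∫ τ in (0:ℝ)..t, Real.exp ((1 - α) * (M₁ t - M₁ τ)) := by
      apply intervalIntegral.integral_mono_on ht (hint M₂ hM₂c) (hint M₁ hM₁c)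
      intro x hx
      apply Real.exp_le_exp.mpr
      have := key x hx.1 hx.2
      nlinarith
    have hα1 : (0:ℝ) ≤ α - 1 := by linarith
    nlinarith [mul_le_mul_of_nonneg_left hterm2 hα1]
  -- positivity of inner expression for μ₂
  have hpos : 0 < Real.exp ((1 - α) * M₂ t) *
      (γ ^ (1 - α) + (α - 1) * ∫ τ in (0:ℝ)..t, Real.exp (-(1 - α) * M₂ τ)) := by
    apply mul_pos (Real.exp_pos _)
    have h1 : (0:ℝ) < γ ^ (1 - α) := Real.rpow_pos_of_pos hγ _
    have h2 : (0:ℝ) ≤ ∫ τ in (0:ℝ)..t, Real.exp (-(1 - α) * M₂ τ) :=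
      intervalIntegral.integral_nonneg ht (fun x _ => (Real.exp_pos _).le)
    nlinarith
  unfold bernoulliFactor
  exact Real.rpow_le_rpow_of_nonpos hpos hinner
    (by apply div_nonpos_of_nonneg_of_nonpos <;> linarith)
end

section
/- Let n ≥ 1, α > 1, and let μ : ℝ → ℝ. Let u₋ : EuclideanSpace ℝ (Fin n) → ℝ and let x be a point such that u₋ is twice continuously differentiable on a neighborhood of x, u₋ ≥ 0 on a neighborhood of x, and −Δu₋(x) ≤ u₋(x)^{1/α}. Let S : ℝ → ℝ and t ∈ ℝ be such that S(t) > 0 and S is differentiable at t with S'(t) = μ(t)·S(t) − S(t)^α. Define v₋(y,s) := S(s)·u₋(y)^{1/α}. Then the function s ↦ v₋(x,s) is differentiable at t and its derivative D satisfies D − Δ_y[ y ↦ v₋(y,t)^α ](x) − μ(t)·v₋(x,t) ≤ 0; that is, v₋ is a pointwise subsolution of ∂_t v = Δ(v^α) + μ(t)v at (x,t). -/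
open Real Set

/-- The Laplace operator on `EuclideanSpace ℝ (Fin n)`: the sum of the pure second
derivatives along the standard orthonormal coordinate directions. -/
noncomputable def laplacian {n : ℕ} (f : EuclideanSpace ℝ (Fin n) → ℝ)
    (x : EuclideanSpace ℝ (Fin n)) : ℝ :=
  ∑ i : Fin n,
    fderiv ℝ (fun y => fderiv ℝ f y (EuclideanSpace.single i 1)) x (EuclideanSpace.single i 1)

theorem separable_subsolution {n : ℕ} (hn : 1 ≤ n) (α : ℝ) (hα : 1 < α) (μ : ℝ → ℝ)
    (um : EuclideanSpace ℝ (Fin n) → ℝ) (x : EuclideanSpace ℝ (Fin n))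
    (hu : ContDiffAt ℝ 2 um x) (hu0 : ∀ᶠ y in nhds x, 0 ≤ um y)
    (hlap : -laplacian um x ≤ um x ^ (1 / α))
    (S : ℝ → ℝ) (t : ℝ) (hS : 0 < S t)
    (hS' : HasDerivAt S (μ t * S t - S t ^ α) t) :
    ∃ D : ℝ, HasDerivAt (fun s => S s * um x ^ (1 / α)) D t ∧
      D - laplacian (fun y => (S t * um y ^ (1 / α)) ^ α) x
        - μ t * (S t * um x ^ (1 / α)) ≤ 0 := by
  have hα0 : α ≠ 0 := by positivity
  set c : ℝ := S t ^ α with hc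
  have hcpos : 0 < c := Real.rpow_pos_of_pos hS α
  -- the function eventually equals c * um
  have hev : (fun y => (S t * um y ^ (1 / α)) ^ α) =ᶠ[nhds x] fun y => c * um y := by
    filter_upwards [hu0] with y hy
    rw [Real.mul_rpow hS.le (Real.rpow_nonneg hy _), ← Real.rpow_mul hy,
      one_div_mul_cancel hα0, Real.rpow_one]
  have hdiff : ∀ᶠ y in nhds x, DifferentiableAt ℝ um y := by
    filter_upwards [hu.eventually (by simp)] with y hy
    exact hy.differentiableAt (by simp)
  have hlapc : laplacian (fun y => (S t * um y ^ (1 / α)) ^ α) x = c * laplacian um x := by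
    unfold laplacian
    rw [Finset.mul_sum]
    refine Finset.sum_congr rfl fun i _ => ?_
    set e := EuclideanSpace.single i (1 : ℝ)
    have h1 : (fun y => fderiv ℝ (fun z => (S t * um z ^ (1 / α)) ^ α) y e)
        =ᶠ[nhds x] fun y => c * fderiv ℝ um y e := by
      filter_upwards [hev.fderiv (𝕜 := ℝ), hdiff] with y hy hy'
      rw [hy, fderiv_const_mul hy']
      simp
    rw [h1.fderiv_eq]
    have h2 : DifferentiableAt ℝ (fun y => fderiv ℝ um y e) x := by
      have h3 : ContDiffAt ℝ 1 (fderiv ℝ um) x := hu.fderiv_right (m := 1) le_rfl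
      exact (ContinuousLinearMap.apply ℝ ℝ e).differentiable.differentiableAt.comp x
        (h3.differentiableAt (by simp))
    rw [fderiv_const_mul h2]
    simp
  refine ⟨(μ t * S t - S t ^ α) * um x ^ (1 / α), hS'.mul_const _, ?_⟩
  rw [hlapc]
  have h4 : 0 ≤ um x ^ (1 / α) + laplacian um x := by linarith
  nlinarith [mul_nonneg hcpos.le h4]
end

section
/- Let α > 1, γ > 0, and let μ : ℝ → ℝ be continuous with 0 < μ(t) ≤ M for all t ≥ 0, where M > 0. Then S_{γ,μ,α}(t) ≤ max(γ, M^{1/(α−1)}) for every t ≥ 0; that is, the Bernoulli factor remains bounded above for all time when the growth rate is bounded. -/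
open Real Set

lemma integral_exp_mul_aux (c t : ℝ) (hc : c ≠ 0) :
    ∫ τ in (0:ℝ)..t, Real.exp (c * τ) = (Real.exp (c * t) - 1) / c := by
  have h := intervalIntegral.integral_comp_mul_left (a := (0:ℝ)) (b := t)
      (fun x => Real.exp x) hc
  simp [integral_exp, Real.exp_zero] at h
  rw [h]
  field_simp

theorem bernoulliFactor_bounded_above (α γ M : ℝ) (hα : 1 < α) (hγ : 0 < γ) (hM : 0 < M)
    (μ : ℝ → ℝ) (hμc : Continuous μ)
    (hμ : ∀ t, 0 ≤ t → 0 < μ t ∧ μ t ≤ M) :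
    ∀ t, 0 ≤ t → bernoulliFactor α γ μ t ≤ max γ (M ^ (1 / (α - 1))) := by
  intro t ht
  set β := α - 1 with hβdef
  have hβ0 : 0 < β := by simp only [hβdef]; linarith
  set I : ℝ → ℝ := fun τ => ∫ s in (0:ℝ)..τ, μ s with hIdef
  have hIcont : Continuous I :=
    intervalIntegral.continuous_primitive (fun a b => hμc.intervalIntegrable a b) 0
  have hIdiff : ∀ τ, 0 ≤ τ → τ ≤ t → I t - I τ ≤ M * (t - τ) := by
    intro τ hτ0 hτt
    have hsplit : I τ + ∫ s in τ..t, μ s = I t :=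
      intervalIntegral.integral_add_adjacent_intervals (hμc.intervalIntegrable 0 τ)
        (hμc.intervalIntegrable τ t)
    have hb : (∫ s in τ..t, μ s) ≤ ∫ _ in τ..t, M := by
      apply intervalIntegral.integral_mono_on hτt (hμc.intervalIntegrable τ t)
        intervalIntegrable_const
      intro s hs
      exact (hμ s (le_trans hτ0 hs.1)).2
    rw [intervalIntegral.integral_const, smul_eq_mul] at hb
    nlinarith
  -- integral comparison
  have hintcomp : ∫ τ in (0:ℝ)..t, Real.exp (β * I t - β * M * (t - τ))
      ≤ ∫ τ in (0:ℝ)..t, Real.exp (β * I τ) := by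
    apply intervalIntegral.integral_mono_on ht
    · exact ((Real.continuous_exp.comp (by continuity)).intervalIntegrable 0 t)
    · exact ((Real.continuous_exp.comp (continuous_const.mul hIcont)).intervalIntegrable 0 t)
    · intro τ hτ
      apply Real.exp_le_exp.2
      have := hIdiff τ hτ.1 hτ.2
      nlinarith
  -- compute the lower integral
  have hcalc : ∫ τ in (0:ℝ)..t, Real.exp (β * I t - β * M * (t - τ))
      = Real.exp (β * I t - β * M * t) * ((Real.exp (β * M * t) - 1) / (β * M)) := by
    have h1 : ∀ τ : ℝ, Real.exp (β * I t - β * M * (t - τ))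
        = Real.exp (β * I t - β * M * t) * Real.exp ((β * M) * τ) := by
      intro τ; rw [← Real.exp_add]; ring_nf
    simp_rw [h1]
    rw [intervalIntegral.integral_const_mul, integral_exp_mul_aux (β * M) t
      (by positivity)]
  set u := Real.exp (-(β * M * t)) with hudef
  have hu0 : 0 < u := Real.exp_pos _
  have hu1 : u ≤ 1 := by
    rw [hudef]
    apply Real.exp_le_one_iff.2
    have : 0 ≤ β * M * t := by positivity
    linarith
  -- exp(-β I t) ≥ u
  have hIt : I t ≤ M * t := by
    have h0 : I 0 = 0 := by simp [hIdef]
    have := hIdiff 0 le_rfl ht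
    simp [h0] at this; linarith
  have hexpIt : u ≤ Real.exp (-(β * I t)) := Real.exp_le_exp.2 (by nlinarith)
  -- lower bound on the second term
  have hJ : (1 - u) / M ≤ Real.exp (-(β * I t)) * (β * ∫ τ in (0:ℝ)..t,
      Real.exp (β * I τ)) := by
    have h2 : Real.exp (β * I t - β * M * t) * ((Real.exp (β * M * t) - 1) / (β * M))
        ≤ ∫ τ in (0:ℝ)..t, Real.exp (β * I τ) := hcalc ▸ hintcomp
    have h3 : Real.exp (-(β * I t)) * β *
        (Real.exp (β * I t - β * M * t) * ((Real.exp (β * M * t) - 1) / (β * M)))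
        ≤ Real.exp (-(β * I t)) * (β * ∫ τ in (0:ℝ)..t, Real.exp (β * I τ)) := by
      rw [mul_assoc]
      exact mul_le_mul_of_nonneg_left (mul_le_mul_of_nonneg_left h2 hβ0.le)
        (Real.exp_pos _).le
    refine le_trans (le_of_eq ?_) h3
    have e1 : Real.exp (-(β * I t)) * Real.exp (β * I t - β * M * t) = u := by
      rw [hudef, ← Real.exp_add]; ring_nf
    have e2 : u * Real.exp (β * M * t) = 1 := by
      rw [hudef, ← Real.exp_add]; simp
    have hβM : (β * M) ≠ 0 := by positivity
    rw [show Real.exp (-(β * I t)) * β *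
        (Real.exp (β * I t - β * M * t) * ((Real.exp (β * M * t) - 1) / (β * M)))
        = β * (Real.exp (-(β * I t)) * Real.exp (β * I t - β * M * t) * (Real.exp (β * M * t) - 1))
          / (β * M) by ring, mul_div_mul_left _ _ hβ0.ne', e1, mul_sub, e2, mul_one]
  -- define X
  set X := Real.exp (-(β * I t)) * (γ ^ (-β) + β * ∫ τ in (0:ℝ)..t,
      Real.exp (β * I τ)) with hXdef
  have hXlb : u * γ ^ (-β) + (1 - u) / M ≤ X := by
    have hγp : (0:ℝ) < γ ^ (-β) := Real.rpow_pos_of_pos hγ _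
    have hX' : X = Real.exp (-(β * I t)) * γ ^ (-β)
        + Real.exp (-(β * I t)) * (β * ∫ τ in (0:ℝ)..t, Real.exp (β * I τ)) := by
      rw [hXdef]; ring
    rw [hX']
    have h4 : u * γ ^ (-β) ≤ Real.exp (-(β * I t)) * γ ^ (-β) :=
      mul_le_mul_of_nonneg_right hexpIt hγp.le
    linarith
  -- bernoulliFactor equals X ^ (1/(1-α))
  have hIτ : ∀ τ : ℝ, (∫ s in (0:ℝ)..τ, μ s) = I τ := fun τ => rfl
  have hbase : Real.exp ((1 - α) * ∫ s in (0:ℝ)..t, μ s) *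
      (γ ^ (1 - α) +
        (α - 1) * ∫ τ in (0:ℝ)..t, Real.exp (-(1 - α) * ∫ s in (0:ℝ)..τ, μ s)) = X := by
    rw [hXdef]
    rw [show ((1 - α) : ℝ) = -β by rw [hβdef]; ring]
    simp only [hIτ, neg_mul, neg_neg]
    rw [hβdef]
  have hSX : bernoulliFactor α γ μ t = X ^ (1 / (1 - α)) := by
    rw [bernoulliFactor, hbase]
  have hexpo : 1 / (1 - α) = -β⁻¹ := by
    rw [hβdef, div_eq_mul_inv, one_mul, neg_inv]
    congr 1; ring
  have hmono : ∀ m : ℝ, 0 < m → m ≤ X → X ^ (1 / (1 - α)) ≤ m ^ (1 / (1 - α)) := by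
    intro m hm hmX
    exact Real.rpow_le_rpow_of_nonpos hm hmX (by rw [hexpo]; simp; positivity)
  rw [hSX]
  rcases le_total (γ ^ (-β)) M⁻¹ with hcase | hcase
  · -- X ≥ γ^(-β), so S ≤ γ
    have hX1 : γ ^ (-β) ≤ X := by
      refine le_trans ?_ hXlb
      have h5 : (1 - u) * γ ^ (-β) ≤ (1 - u) / M := by
        rw [div_eq_mul_inv]
        exact mul_le_mul_of_nonneg_left hcase (by linarith)
      nlinarith
    have hle := hmono _ (Real.rpow_pos_of_pos hγ _) hX1
    have heq : (γ ^ (-β)) ^ (1 / (1 - α)) = γ := by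
      rw [hexpo, show (-β⁻¹ : ℝ) = (-β)⁻¹ from neg_inv]
      exact Real.rpow_rpow_inv hγ.le (neg_ne_zero.2 hβ0.ne')
    calc X ^ (1 / (1 - α)) ≤ (γ ^ (-β)) ^ (1 / (1 - α)) := hle
      _ = γ := heq
      _ ≤ max γ (M ^ (1 / (α - 1))) := le_max_left _ _
  · -- X ≥ M⁻¹, so S ≤ M^(1/(α-1))
    have hX1 : M⁻¹ ≤ X := by
      refine le_trans ?_ hXlb
      have h5 : u * M⁻¹ ≤ u * γ ^ (-β) := mul_le_mul_of_nonneg_left hcase hu0.le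
      have h6 : (1 - u) / M = (1 - u) * M⁻¹ := by rw [div_eq_mul_inv]
      nlinarith
    have hle := hmono _ (by positivity) hX1
    have heq : (M⁻¹ : ℝ) ^ (1 / (1 - α)) = M ^ (1 / (α - 1)) := by
      rw [hexpo, ← Real.rpow_neg_one M, ← Real.rpow_mul hM.le]
      congr 1
      rw [hβdef]
      have : α - 1 ≠ 0 := by linarith
      field_simp
    calc X ^ (1 / (1 - α)) ≤ (M⁻¹ : ℝ) ^ (1 / (1 - α)) := hle
      _ = M ^ (1 / (α - 1)) := heq
      _ ≤ max γ (M ^ (1 / (α - 1))) := le_max_right _ _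
end

section
/- Let α > 1, γ > 0, and let μ : ℝ → ℝ be continuous with μ(t) ≥ m for all t ≥ 0, where m > 0. Then S_{γ,μ,α}(t) ≥ min(γ, m^{1/(α−1)}) for every t ≥ 0; that is, the Bernoulli factor is bounded below away from zero, uniformly in time, when the growth rate is bounded below by a positive constant. -/
open Real Set

theorem bernoulliFactor_bounded_below (α γ m : ℝ) (hα : 1 < α) (hγ : 0 < γ) (hm : 0 < m)
    (μ : ℝ → ℝ) (hμc : Continuous μ)
    (hμ : ∀ t, 0 ≤ t → m ≤ μ t) :
    ∀ t, 0 ≤ t → min γ (m ^ (1 / (α - 1))) ≤ bernoulliFactor α γ μ t := by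
  intro t ht
  set β := α - 1 with hβdef
  have hβ : 0 < β := by rw [hβdef]; linarith
  have h1α : (1 - α) = -β := by rw [hβdef]; ring
  set M : ℝ → ℝ := fun u => ∫ s in (0:ℝ)..u, μ s with hMdef
  have hMderiv : ∀ u, HasDerivAt M (μ u) u := fun u =>
    intervalIntegral.integral_hasDerivAt_right (hμc.intervalIntegrable _ _)
      hμc.stronglyMeasurable.stronglyMeasurableAtFilter hμc.continuousAt
  have hMdiff : Differentiable ℝ M := fun u => (hMderiv u).differentiableAt
  have hMcont : Continuous M := hMdiff.continuous
  have hM0 : M 0 = 0 := intervalIntegral.integral_same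
  have hMt : 0 ≤ M t :=
    intervalIntegral.integral_nonneg ht fun s hs => le_trans hm.le (hμ s hs.1)
  have hFderiv : ∀ u, HasDerivAt (fun u => Real.exp (β * M u))
      (Real.exp (β * M u) * (β * μ u)) u := fun u =>
    ((hMderiv u).const_mul β).exp
  have hEcont : Continuous fun u => Real.exp (β * M u) :=
    Real.continuous_exp.comp (continuous_const.mul hMcont)
  have hFTC : ∫ τ in (0:ℝ)..t, Real.exp (β * M τ) * (β * μ τ)
      = Real.exp (β * M t) - 1 := by
    rw [intervalIntegral.integral_eq_sub_of_hasDerivAt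
      (fun u _ => hFderiv u) ((hEcont.mul (continuous_const.mul hμc)).intervalIntegrable _ _)]
    simp [hM0]
  set J : ℝ := ∫ τ in (0:ℝ)..t, Real.exp (β * M τ) with hJdef
  have hJnonneg : 0 ≤ J :=
    intervalIntegral.integral_nonneg ht fun s _ => (Real.exp_pos _).le
  have hJbound : β * m * J ≤ Real.exp (β * M t) - 1 := by
    rw [← hFTC, hJdef, ← intervalIntegral.integral_const_mul]
    refine intervalIntegral.integral_mono_on ht
      ((continuous_const.mul hEcont).intervalIntegrable _ _)
      ((hEcont.mul (continuous_const.mul hμc)).intervalIntegrable _ _) ?_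
    intro s hs
    have h1 : m ≤ μ s := hμ s hs.1
    have h2 : (0:ℝ) < Real.exp (β * M s) := Real.exp_pos _
    nlinarith [mul_nonneg (mul_nonneg hβ.le (sub_nonneg.mpr h1)) h2.le]
  set x : ℝ := Real.exp (-β * M t) with hxdef
  have hx0 : 0 < x := Real.exp_pos _
  have hx1 : x ≤ 1 := by
    rw [hxdef]
    apply Real.exp_le_one_iff.mpr
    nlinarith
  have hxe : x * Real.exp (β * M t) = 1 := by
    rw [hxdef, ← Real.exp_add]; ring_nf; exact Real.exp_zero
  have hint : (∫ τ in (0:ℝ)..t, Real.exp (-(1 - α) * ∫ s in (0:ℝ)..τ, μ s)) = J := by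
    refine intervalIntegral.integral_congr fun τ _ => ?_
    have e1 : -(1 - α) * ∫ s in (0:ℝ)..τ, μ s = β * M τ := by
      rw [hMdef, h1α]; ring
    rw [e1]
  have hBF : bernoulliFactor α γ μ t
      = (x * (γ ^ (-β) + β * J)) ^ (1 / (1 - α)) := by
    rw [bernoulliFactor, hint, h1α, hxdef]
  set C : ℝ := max (γ ^ (-β)) (1 / m) with hCdef
  have hγβ : (0:ℝ) < γ ^ (-β) := Real.rpow_pos_of_pos hγ _
  have hIpos : 0 < x * (γ ^ (-β) + β * J) := by positivity
  have h3 : x * (β * J) ≤ (1 - x) * (1 / m) := by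
    have h4 : x * (β * m * J) ≤ x * (Real.exp (β * M t) - 1) :=
      mul_le_mul_of_nonneg_left hJbound hx0.le
    have h5 : x * (Real.exp (β * M t) - 1) = 1 - x := by
      rw [mul_sub, hxe]; ring
    rw [h5] at h4
    calc x * (β * J) = x * (β * m * J) / m := by field_simp
      _ ≤ (1 - x) / m := by gcongr
      _ = (1 - x) * (1 / m) := by ring
  have hIC : x * (γ ^ (-β) + β * J) ≤ C := by
    have h1 : γ ^ (-β) ≤ C := le_max_left _ _
    have h2 : 1 / m ≤ C := le_max_right _ _
    calc x * (γ ^ (-β) + β * J) = x * γ ^ (-β) + x * (β * J) := by ring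
      _ ≤ x * C + (1 - x) * (1 / m) := by
          have := mul_le_mul_of_nonneg_left h1 hx0.le; linarith
      _ ≤ x * C + (1 - x) * C := by
          have := mul_le_mul_of_nonneg_left h2 (show (0:ℝ) ≤ 1 - x by linarith); linarith
      _ = C := by ring
  have hCpos : 0 < C := lt_of_lt_of_le hγβ (le_max_left _ _)
  have hexp_nonpos : 1 / (1 - α) ≤ 0 := by
    rw [h1α]
    exact div_nonpos_of_nonneg_of_nonpos zero_le_one (by linarith)
  have hmain : C ^ (1 / (1 - α)) ≤ bernoulliFactor α γ μ t := by
    rw [hBF]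
    exact Real.rpow_le_rpow_of_nonpos hIpos hIC hexp_nonpos
  refine le_trans ?_ hmain
  have hβne : β ≠ 0 := hβ.ne'
  rcases le_total (γ ^ (-β)) (1 / m) with h | h
  · have hC : C = 1 / m := max_eq_right h
    have hm1 : (1 / m : ℝ) = m ^ (-1 : ℝ) := by
      rw [Real.rpow_neg_one, one_div]
    rw [hC, hm1, ← Real.rpow_mul hm.le]
    have e4 : (-1 : ℝ) * (1 / (1 - α)) = 1 / β := by
      rw [h1α]; field_simp
    rw [e4]
    exact min_le_right _ _
  · have hC : C = γ ^ (-β) := max_eq_left h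
    rw [hC, ← Real.rpow_mul hγ.le]
    have e5 : (-β) * (1 / (1 - α)) = 1 := by
      rw [h1α]; field_simp
    rw [e5, Real.rpow_one]
    exact min_le_left _ _
end
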